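/- arXiv:2302.01631 — 6 statements merged into one kernel-verified Lean document; each statement's English description precedes it below -/
import Mathlib

section
/- Jet evaluation ⊙ satisfies the bound ‖σ⊙ξ‖ ≤ ‖ξ‖ + (k+1)‖σ‖ + ‖ξ‖·‖σ‖, where σ = (x, y, p) is a k-jet from E to F, ξ = (x, X) ∈ E × E a tangent vector at x, and σ⊙ξ is the (k−1)-jet of the tangent map determined by σ at ξ. -/
/-!
Each component of `σ⊙ξ` is a component of `σ` precomposed with the projections `π_H, π_V`
(which have norm at most one), possibly with `X` inserted in the last slot. Hence
`‖η^H_j‖ ≤ ‖p_j‖` and `‖η^V_j‖ ≤ ‖X‖‖p_{j+1}‖ + j‖p_j‖`. Summing over `j`, the weights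
`j + 1 ≤ k` and the shift `j ↦ j + 1` give `∑_j ‖η_j‖ ≤ kP + ‖X‖(P - ‖p_1‖)` with
`P = ∑_{j=1}^k ‖p_j‖`, and the missing `‖X‖‖p_1‖` pays for the value component `p_1(X)`.
-/

open Finset

namespace ContinuousMultilinearMap

variable {𝕜 E E' F : Type*} [NontriviallyNormedField 𝕜]
  [SeminormedAddCommGroup E] [NormedSpace 𝕜 E] [SeminormedAddCommGroup E'] [NormedSpace 𝕜 E']
  [SeminormedAddCommGroup F] [NormedSpace 𝕜 F]

theorem le_opNorm_mul_prod_mul_of_le_snoc {n : ℕ}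
    (f : ContinuousMultilinearMap 𝕜 (fun _ : Fin (n + 1) => E) F) {m : Fin n → E} (x : E)
    {b : Fin n → ℝ} (hm : ∀ i, ‖m i‖ ≤ b i) :
    ‖f (Fin.snoc m x)‖ ≤ ‖f‖ * (∏ i, b i) * ‖x‖ := by
  have hsnoc : ∀ i, ‖(Fin.snoc m x : Fin (n + 1) → E) i‖ ≤ (Fin.snoc b ‖x‖ : Fin (n + 1) → ℝ) i :=
    Fin.lastCases (by simp) fun i => by simpa using hm i
  simpa only [Fin.prod_snoc, mul_assoc] using f.le_opNorm_mul_prod_of_le hsnoc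

theorem opNorm_le_of_apply_eq_comp_fst {ι : Type*} [Fintype ι]
    {η : ContinuousMultilinearMap 𝕜 (fun _ : ι => E × E') F}
    {f : ContinuousMultilinearMap 𝕜 (fun _ : ι => E) F}
    (hη : ∀ v, η v = f (fun i => (v i).1)) : ‖η‖ ≤ ‖f‖ :=
  opNorm_le_bound (norm_nonneg f) fun v =>
    hη v ▸ f.le_opNorm_mul_prod_of_le fun i => norm_fst_le (v i)

theorem opNorm_le_of_apply_eq_snoc_add_smul {n : ℕ}
    {η : ContinuousMultilinearMap 𝕜 (fun _ : Fin n => E × E') F}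
    {f : ContinuousMultilinearMap 𝕜 (fun _ : Fin (n + 1) => E) F}
    {g : ContinuousMultilinearMap 𝕜 (fun _ : Fin n => E) F}
    {X : E} {c : 𝕜} {w : (Fin n → E × E') → Fin n → E} (hw : ∀ v i, ‖w v i‖ ≤ ‖v i‖)
    (hη : ∀ v, η v = f (Fin.snoc (fun i => (v i).1) X) + c • g (w v)) :
    ‖η‖ ≤ ‖X‖ * ‖f‖ + ‖c‖ * ‖g‖ := by
  refine opNorm_le_bound (by positivity) fun v => ?_
  calc ‖η v‖
      ≤ ‖f (Fin.snoc (fun i => (v i).1) X)‖ + ‖c‖ * ‖g (w v)‖ := by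
        rw [hη, ← norm_smul]; exact norm_add_le _ _
    _ ≤ ‖f‖ * (∏ i, ‖v i‖) * ‖X‖ + ‖c‖ * (‖g‖ * ∏ i, ‖v i‖) := by
        gcongr
        · exact f.le_opNorm_mul_prod_mul_of_le_snoc X fun i => norm_fst_le (v i)
        · exact g.le_opNorm_mul_prod_of_le (hw v)
    _ = (‖X‖ * ‖f‖ + ‖c‖ * ‖g‖) * ∏ i, ‖v i‖ := by ring

end ContinuousMultilinearMap

theorem Finset.sum_Icc_one_pred_add_one {M : Type*} [AddCommMonoid M] {k : ℕ} (hk : 1 ≤ k)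
    (f : ℕ → M) : f 1 + ∑ j ∈ Icc 1 (k - 1), f (j + 1) = ∑ j ∈ Icc 1 k, f j := by
  obtain ⟨m, rfl⟩ : ∃ m, k = m + 1 := ⟨k - 1, by omega⟩
  rw [← insert_Icc_add_one_left_eq_Icc hk, sum_insert (by simp), Nat.add_sub_cancel,
    ← map_add_right_Icc, sum_map]
  rfl

theorem Finset.sum_Icc_one_pred_succ_mul_le {k : ℕ} {a : ℕ → ℝ} (ha : ∀ j, 0 ≤ a j) :
    ∑ j ∈ Icc 1 (k - 1), ((j : ℝ) + 1) * a j ≤ k * ∑ j ∈ Icc 1 k, a j := by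
  rw [mul_sum]
  calc ∑ j ∈ Icc 1 (k - 1), ((j : ℝ) + 1) * a j
      ≤ ∑ j ∈ Icc 1 (k - 1), (k : ℝ) * a j := by
        refine sum_le_sum fun j hj => ?_
        have : j + 1 ≤ k := by grind
        gcongr
        · exact ha j
        · exact_mod_cast this
    _ ≤ ∑ j ∈ Icc 1 k, (k : ℝ) * a j :=
        sum_le_sum_of_subset_of_nonneg (Icc_subset_Icc_right (by omega))
          fun j _ _ => mul_nonneg k.cast_nonneg (ha j)

theorem stmt_8_general {E F : Type*} [NormedAddCommGroup E] [NormedSpace ℝ E]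
    [NormedAddCommGroup F] [NormedSpace ℝ F]
    (k : ℕ) (hk : 1 ≤ k) (x X : E) (y : F)
    (p : FormalMultilinearSeries ℝ E F)
    (ηH ηV : FormalMultilinearSeries ℝ (E × E) F)
    (hH : ∀ j, 1 ≤ j → j ≤ k - 1 → ∀ v : Fin j → E × E,
      ηH j v = p j (fun i => (v i).1))
    (hV : ∀ j, 1 ≤ j → j ≤ k - 1 → ∀ v : Fin j → E × E,
      ηV j v = p (j + 1) (Fin.snoc (fun i => (v i).1) X)
        + (j : ℝ) • p j (fun i => if (i : ℕ) = j - 1 then (v i).2 else (v i).1)) :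
    ‖x‖ + ‖X‖ + (‖y‖ + ‖p 1 (fun _ => X)‖)
        + ∑ j ∈ Finset.Icc 1 (k - 1), (‖ηH j‖ + ‖ηV j‖) ≤
      (‖x‖ + ‖X‖) + ((k : ℝ) + 1) * (‖x‖ + ‖y‖ + ∑ j ∈ Finset.Icc 1 k, ‖p j‖)
        + (‖x‖ + ‖X‖) * (‖x‖ + ‖y‖ + ∑ j ∈ Finset.Icc 1 k, ‖p j‖) := by
  set T := ∑ j ∈ Icc 1 k, ‖p j‖
  have hp1 : ‖p 1 (fun _ => X)‖ ≤ ‖X‖ * ‖p 1‖ := by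
    simpa [mul_comm] using (p 1).le_opNorm fun _ => X
  have hcomponent : ∀ j ∈ Icc 1 (k - 1),
      ‖ηH j‖ + ‖ηV j‖ ≤ ((j : ℝ) + 1) * ‖p j‖ + ‖X‖ * ‖p (j + 1)‖ := by
    intro j hj
    obtain ⟨hj1, hjk⟩ := mem_Icc.1 hj
    have hHj := ContinuousMultilinearMap.opNorm_le_of_apply_eq_comp_fst (hH j hj1 hjk)
    have hVj := ContinuousMultilinearMap.opNorm_le_of_apply_eq_snoc_add_smul
      (fun v i => by split_ifs <;> simp [norm_fst_le, norm_snd_le]) (hV j hj1 hjk)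
    rw [Real.norm_natCast] at hVj
    linarith
  have hsum : ∑ j ∈ Icc 1 (k - 1), (‖ηH j‖ + ‖ηV j‖) ≤ k * T + ‖X‖ * (T - ‖p 1‖) := by
    have hshift := sum_Icc_one_pred_add_one hk fun j => ‖p j‖
    calc ∑ j ∈ Icc 1 (k - 1), (‖ηH j‖ + ‖ηV j‖)
        ≤ ∑ j ∈ Icc 1 (k - 1), (((j : ℝ) + 1) * ‖p j‖ + ‖X‖ * ‖p (j + 1)‖) :=
          sum_le_sum hcomponent
      _ = ∑ j ∈ Icc 1 (k - 1), ((j : ℝ) + 1) * ‖p j‖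
            + ‖X‖ * ∑ j ∈ Icc 1 (k - 1), ‖p (j + 1)‖ := by
          rw [sum_add_distrib, mul_sum]
      _ ≤ k * T + ‖X‖ * (T - ‖p 1‖) := by
          rw [eq_sub_of_add_eq' hshift]
          gcongr
          exact sum_Icc_one_pred_succ_mul_le fun j => norm_nonneg (p j)
  have hT : 0 ≤ T := sum_nonneg fun j _ => norm_nonneg (p j)
  have hk0 : (0 : ℝ) ≤ k := k.cast_nonneg
  linarith [norm_nonneg x, norm_nonneg y, mul_nonneg hk0 (norm_nonneg x),
    mul_nonneg hk0 (norm_nonneg y), mul_nonneg (norm_nonneg x) hT,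
    mul_nonneg (norm_nonneg X) (norm_nonneg x), mul_nonneg (norm_nonneg X) (norm_nonneg y),
    mul_nonneg (norm_nonneg x) (norm_nonneg x), mul_nonneg (norm_nonneg x) (norm_nonneg y)]

/-- Jet evaluation satisfies `‖σ⊙ξ‖ ≤ ‖ξ‖ + (k+1)‖σ‖ + ‖ξ‖·‖σ‖`.
Here `σ = (x, y, p)` is a `k`-jet from `E` to `F`, `ξ = (x, X)` a tangent vector, and the
`(k−1)`-jet `σ⊙ξ` has base `(x, X)`, value `(y, p₁(X))`, and `j`-th component (for
`1 ≤ j ≤ k−1`) with horizontal part `p_j(π_H,…,π_H)` and vertical part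
`p_{j+1}(π_H,…,π_H,X) + j·p_j(π_H,…,π_H,π_V)`; jet norms are sums of component norms. -/
theorem stmt_8 {E F : Type*} [NormedAddCommGroup E] [NormedSpace ℝ E]
    [NormedAddCommGroup F] [NormedSpace ℝ F]
    (k : ℕ) (hk : 1 ≤ k) (x X : E) (y : F)
    (p : FormalMultilinearSeries ℝ E F)
    (hp0 : p 0 = 0) (hpk : ∀ n, k < n → p n = 0)
    (ηH ηV : FormalMultilinearSeries ℝ (E × E) F)
    (hH : ∀ j, 1 ≤ j → j ≤ k - 1 → ∀ v : Fin j → E × E,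
      ηH j v = p j (fun i => (v i).1))
    (hV : ∀ j, 1 ≤ j → j ≤ k - 1 → ∀ v : Fin j → E × E,
      ηV j v = p (j + 1) (Fin.snoc (fun i => (v i).1) X)
        + (j : ℝ) • p j (fun i => if (i : ℕ) = j - 1 then (v i).2 else (v i).1)) :
    ‖x‖ + ‖X‖ + (‖y‖ + ‖p 1 (fun _ => X)‖)
        + ∑ j ∈ Finset.Icc 1 (k - 1), (‖ηH j‖ + ‖ηV j‖) ≤
      (‖x‖ + ‖X‖) + ((k : ℝ) + 1) * (‖x‖ + ‖y‖ + ∑ j ∈ Finset.Icc 1 k, ‖p j‖)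
        + (‖x‖ + ‖X‖) * (‖x‖ + ‖y‖ + ∑ j ∈ Finset.Icc 1 k, ‖p j‖) :=
  stmt_8_general k hk x X y p ηH ηV hH hV
end

section
/- Jet evaluation is jointly locally Lipschitz: ‖σ̃⊙ξ̃ − σ⊙ξ‖ ≤ ‖σ̃ − σ‖(k + ‖ξ̃‖) + ‖ξ̃ − ξ‖(1 + ‖σ‖), for k-jets σ, σ̃ from E to F and tangent vectors ξ, ξ̃ ∈ E × E. -/
/-!
Every component of `σ̃⊙ξ̃ − σ⊙ξ` is a difference of multilinear expressions in which only the
series and the last slot change, and `p̃(…, X̃) − p(…, X) = (p̃ − p)(…, X̃) + p(…, X̃ − X)` bounds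
it by `‖p̃ − p‖ ‖X̃‖ + ‖p‖ ‖X̃ − X‖`. The horizontal component and the `j • p_j` part of the
vertical component of order `j` together cost at most `(1 + j) ‖p̃_j − p_j‖ ≤ k ‖p̃_j − p_j‖`,
which is where the factor `k` comes from.
-/

open Finset

theorem add_sum_Icc_sub_one_succ_eq_sum_Icc (c : ℕ → ℝ) {k : ℕ} (hk : 1 ≤ k) :
    c 1 + ∑ j ∈ Icc 1 (k - 1), c (j + 1) = ∑ j ∈ Icc 1 k, c j := by
  obtain ⟨m, rfl⟩ := Nat.exists_eq_add_of_le' hk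
  rw [Nat.add_sub_cancel]
  clear hk
  induction m with
  | zero => simp
  | succ m ih => rw [sum_Icc_succ_top (by omega), sum_Icc_succ_top (by omega), ← ih, ← add_assoc]

theorem add_sum_Icc_sub_one_le {k : ℕ} (hk : 1 ≤ k) {a c d : ℕ → ℝ} (hd : ∀ j, 0 ≤ d j)
    (ha : ∀ j ∈ Icc 1 (k - 1), a j ≤ (1 + j) * d j + c (j + 1)) :
    c 1 + ∑ j ∈ Icc 1 (k - 1), a j ≤ k * ∑ j ∈ Icc 1 k, d j + ∑ j ∈ Icc 1 k, c j := by
  have hjk : ∀ j ∈ Icc 1 (k - 1), (1 + j : ℝ) ≤ k := fun j hj => by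
    rw [mem_Icc] at hj
    exact_mod_cast (by omega : 1 + j ≤ k)
  calc c 1 + ∑ j ∈ Icc 1 (k - 1), a j
      ≤ c 1 + ∑ j ∈ Icc 1 (k - 1), (k * d j + c (j + 1)) := by
        gcongr with j hj
        exact (ha j hj).trans (by gcongr; exacts [hd j, hjk j hj])
    _ = k * ∑ j ∈ Icc 1 (k - 1), d j + ∑ j ∈ Icc 1 k, c j := by
        rw [sum_add_distrib, ← mul_sum, ← add_sum_Icc_sub_one_succ_eq_sum_Icc c hk]
        ring
    _ ≤ k * ∑ j ∈ Icc 1 k, d j + ∑ j ∈ Icc 1 k, c j := by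
        gcongr
        exacts [fun j _ _ => hd j, Nat.sub_le k 1]

namespace ContinuousMultilinearMap

variable {𝕜 G G' H : Type*} [NontriviallyNormedField 𝕜]
  [NormedAddCommGroup G] [NormedSpace 𝕜 G] [NormedAddCommGroup G'] [NormedSpace 𝕜 G']
  [NormedAddCommGroup H] [NormedSpace 𝕜 H]

theorem opNorm_sub_le_of_apply_eq {ι : Type*} [Fintype ι]
    {g g' : ContinuousMultilinearMap 𝕜 (fun _ : ι => G') H}
    {f f' : ContinuousMultilinearMap 𝕜 (fun _ : ι => G) H} {u : (ι → G') → ι → G}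
    (hu : ∀ v i, ‖u v i‖ ≤ ‖v i‖) (hg : ∀ v, g v = f (u v)) (hg' : ∀ v, g' v = f' (u v)) :
    ‖g' - g‖ ≤ ‖f' - f‖ :=
  opNorm_le_bound (norm_nonneg _) fun v => by
    rw [sub_apply, hg, hg', ← sub_apply]
    exact le_opNorm_mul_prod_of_le _ (hu v)

theorem norm_apply_snoc_sub_le {n : ℕ}
    (f f' : ContinuousMultilinearMap 𝕜 (fun _ : Fin (n + 1) => G) H)
    {w : Fin n → G} {b : Fin n → ℝ} (hw : ∀ i, ‖w i‖ ≤ b i) (a a' : G) :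
    ‖f' (Fin.snoc w a') - f (Fin.snoc w a)‖ ≤ (‖f' - f‖ * ‖a'‖ + ‖f‖ * ‖a' - a‖) * ∏ i, b i := by
  have hsnoc : ∀ z : G, ∀ i,
      ‖(Fin.snoc w z : Fin (n + 1) → G) i‖ ≤ Fin.snoc (α := fun _ => ℝ) b ‖z‖ i :=
    fun z i => Fin.lastCases (by simp) (fun i => by simpa using hw i) i
  have hsplit : f' (Fin.snoc w a') - f (Fin.snoc w a)
      = (f' - f) (Fin.snoc w a') + f (Fin.snoc w (a' - a)) := by
    have := f.map_update_sub (Fin.snoc w a) (Fin.last n) a' a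
    simp only [Fin.update_snoc_last] at this
    rw [sub_apply, this]
    abel
  rw [hsplit]
  refine (norm_add_le _ _).trans ?_
  have h₁ := (f' - f).le_opNorm_mul_prod_of_le (hsnoc a')
  have h₂ := f.le_opNorm_mul_prod_of_le (hsnoc (a' - a))
  rw [Fin.prod_snoc] at h₁ h₂
  linarith

theorem opNorm_sub_le_of_apply_eq_snoc_add_smul {n : ℕ}
    {g g' : ContinuousMultilinearMap 𝕜 (fun _ : Fin n => G × G) H}
    {r r' : ContinuousMultilinearMap 𝕜 (fun _ : Fin (n + 1) => G) H}
    {q q' : ContinuousMultilinearMap 𝕜 (fun _ : Fin n => G) H} {X X' : G} {c : 𝕜}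
    {u : (Fin n → G × G) → Fin n → G} (hu : ∀ v i, ‖u v i‖ ≤ ‖v i‖)
    (hg : ∀ v, g v = r (Fin.snoc (fun i => (v i).1) X) + c • q (u v))
    (hg' : ∀ v, g' v = r' (Fin.snoc (fun i => (v i).1) X') + c • q' (u v)) :
    ‖g' - g‖ ≤ ‖r' - r‖ * ‖X'‖ + ‖r‖ * ‖X' - X‖ + ‖c‖ * ‖q' - q‖ :=
  opNorm_le_bound (by positivity) fun v => by
    have hr := r.norm_apply_snoc_sub_le r' (fun i => norm_fst_le (v i)) X X'
    have hq : ‖q' (u v) - q (u v)‖ ≤ ‖q' - q‖ * ∏ i, ‖v i‖ := by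
      rw [← sub_apply]
      exact le_opNorm_mul_prod_of_le _ (hu v)
    rw [sub_apply, hg, hg', add_sub_add_comm, ← smul_sub]
    refine (norm_add_le _ _).trans ?_
    rw [norm_smul]
    nlinarith [mul_le_mul_of_nonneg_left hq (norm_nonneg c)]

end ContinuousMultilinearMap

open ContinuousMultilinearMap

theorem stmt_9_general {E F : Type*} [NormedAddCommGroup E] [NormedSpace ℝ E]
    [NormedAddCommGroup F] [NormedSpace ℝ F]
    (k : ℕ) (hk : 1 ≤ k) (x X x' X' : E) (y y' : F)
    (p p' : FormalMultilinearSeries ℝ E F)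
    (ηH ηV ηH' ηV' : FormalMultilinearSeries ℝ (E × E) F)
    (hH : ∀ j, 1 ≤ j → j ≤ k - 1 → ∀ v : Fin j → E × E,
      ηH j v = p j (fun i => (v i).1))
    (hV : ∀ j, 1 ≤ j → j ≤ k - 1 → ∀ v : Fin j → E × E,
      ηV j v = p (j + 1) (Fin.snoc (fun i => (v i).1) X)
        + (j : ℝ) • p j (fun i => if (i : ℕ) = j - 1 then (v i).2 else (v i).1))
    (hH' : ∀ j, 1 ≤ j → j ≤ k - 1 → ∀ v : Fin j → E × E,
      ηH' j v = p' j (fun i => (v i).1))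
    (hV' : ∀ j, 1 ≤ j → j ≤ k - 1 → ∀ v : Fin j → E × E,
      ηV' j v = p' (j + 1) (Fin.snoc (fun i => (v i).1) X')
        + (j : ℝ) • p' j (fun i => if (i : ℕ) = j - 1 then (v i).2 else (v i).1)) :
    ‖x' - x‖ + ‖X' - X‖ + (‖y' - y‖ + ‖p' 1 (fun _ => X') - p 1 (fun _ => X)‖)
        + ∑ j ∈ Finset.Icc 1 (k - 1), (‖ηH' j - ηH j‖ + ‖ηV' j - ηV j‖) ≤
      (‖x' - x‖ + ‖y' - y‖ + ∑ j ∈ Finset.Icc 1 k, ‖p' j - p j‖) * ((k : ℝ) + (‖x'‖ + ‖X'‖))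
        + (‖x' - x‖ + ‖X' - X‖) * (1 + (‖x‖ + ‖y‖ + ∑ j ∈ Finset.Icc 1 k, ‖p j‖)) := by
  have hdeg1 : ‖p' 1 (fun _ => X') - p 1 (fun _ => X)‖
      ≤ ‖p' 1 - p 1‖ * ‖X'‖ + ‖p 1‖ * ‖X' - X‖ := by
    simpa [Fin.snoc_zero] using (p 1).norm_apply_snoc_sub_le (p' 1)
      (w := Fin.elim0) (b := Fin.elim0) (fun i => i.elim0) X X'
  have hcomp : ∀ j ∈ Icc 1 (k - 1), ‖ηH' j - ηH j‖ + ‖ηV' j - ηV j‖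
      ≤ (1 + j) * ‖p' j - p j‖ + (‖p' (j + 1) - p (j + 1)‖ * ‖X'‖ + ‖p (j + 1)‖ * ‖X' - X‖) := by
    intro j hj
    obtain ⟨hj1, hjk⟩ := mem_Icc.mp hj
    have hHj := opNorm_sub_le_of_apply_eq (fun v i => norm_fst_le (v i))
      (hH j hj1 hjk) (hH' j hj1 hjk)
    have hVj := opNorm_sub_le_of_apply_eq_snoc_add_smul
      (fun v i => by split_ifs; exacts [norm_snd_le (v i), norm_fst_le (v i)])
      (hV j hj1 hjk) (hV' j hj1 hjk)
    rw [Real.norm_natCast] at hVj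
    linarith
  have hsum := add_sum_Icc_sub_one_le hk (fun j => norm_nonneg (p' j - p j))
    (c := fun j => ‖p' j - p j‖ * ‖X'‖ + ‖p j‖ * ‖X' - X‖) hcomp
  rw [sum_add_distrib (s := Icc 1 k), ← sum_mul, ← sum_mul] at hsum
  have hk' : (1 : ℝ) ≤ k := by exact_mod_cast hk
  nlinarith [norm_nonneg (x' - x), norm_nonneg (y' - y), norm_nonneg (X' - X), norm_nonneg x',
    norm_nonneg X', norm_nonneg x, norm_nonneg y,
    sum_nonneg fun j (_ : j ∈ Icc 1 k) => norm_nonneg (p' j - p j),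
    sum_nonneg fun j (_ : j ∈ Icc 1 k) => norm_nonneg (p j)]

/-- Jet evaluation is jointly locally Lipschitz:
`‖σ̃⊙ξ̃ − σ⊙ξ‖ ≤ ‖σ̃ − σ‖(k + ‖ξ̃‖) + ‖ξ̃ − ξ‖(1 + ‖σ‖)`, for `k`-jets
`σ = (x,y,p)`, `σ̃ = (x̃,ỹ,p̃)` from `E` to `F` and tangent vectors `ξ = (x,X)`,
`ξ̃ = (x̃,X̃)`; the components of `σ⊙ξ` are as in the definition of jet evaluation, and
jet norms are sums of component norms. -/
theorem stmt_9 {E F : Type*} [NormedAddCommGroup E] [NormedSpace ℝ E]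
    [NormedAddCommGroup F] [NormedSpace ℝ F]
    (k : ℕ) (hk : 1 ≤ k) (x X x' X' : E) (y y' : F)
    (p p' : FormalMultilinearSeries ℝ E F)
    (hp0 : p 0 = 0) (hpk : ∀ n, k < n → p n = 0)
    (hp'0 : p' 0 = 0) (hp'k : ∀ n, k < n → p' n = 0)
    (ηH ηV ηH' ηV' : FormalMultilinearSeries ℝ (E × E) F)
    (hH : ∀ j, 1 ≤ j → j ≤ k - 1 → ∀ v : Fin j → E × E,
      ηH j v = p j (fun i => (v i).1))
    (hV : ∀ j, 1 ≤ j → j ≤ k - 1 → ∀ v : Fin j → E × E,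
      ηV j v = p (j + 1) (Fin.snoc (fun i => (v i).1) X)
        + (j : ℝ) • p j (fun i => if (i : ℕ) = j - 1 then (v i).2 else (v i).1))
    (hH' : ∀ j, 1 ≤ j → j ≤ k - 1 → ∀ v : Fin j → E × E,
      ηH' j v = p' j (fun i => (v i).1))
    (hV' : ∀ j, 1 ≤ j → j ≤ k - 1 → ∀ v : Fin j → E × E,
      ηV' j v = p' (j + 1) (Fin.snoc (fun i => (v i).1) X')
        + (j : ℝ) • p' j (fun i => if (i : ℕ) = j - 1 then (v i).2 else (v i).1)) :
    ‖x' - x‖ + ‖X' - X‖ + (‖y' - y‖ + ‖p' 1 (fun _ => X') - p 1 (fun _ => X)‖)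
        + ∑ j ∈ Finset.Icc 1 (k - 1), (‖ηH' j - ηH j‖ + ‖ηV' j - ηV j‖) ≤
      (‖x' - x‖ + ‖y' - y‖ + ∑ j ∈ Finset.Icc 1 k, ‖p' j - p j‖) * ((k : ℝ) + (‖x'‖ + ‖X'‖))
        + (‖x' - x‖ + ‖X' - X‖) * (1 + (‖x‖ + ‖y‖ + ∑ j ∈ Finset.Icc 1 k, ‖p j‖)) :=
  stmt_9_general k hk x X x' X' y y' p p' ηH ηV ηH' ηV' hH hV hH' hV'
end

section
/- Jet inversion is well defined and continuous on invertible k-jets: on the set J^k(E,F)^× = E × F × GL(E,F) × ∏_{j=2}^k L^j_sym(E;F), the map (x, y, p₁,…,p_k) ↦ (y, x, q₁,…,q_k) with q₁ = p₁⁻¹ and q_k defined recursively by q_k = −Σ_{j=1}^{k−1} Σ_{i₁+⋯+i_j = k, 1 ≤ i₁,…,i_j ≤ k} q_j(p_{i₁}∘q₁, …, p_{i_j}∘q₁), is continuous. -/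
/-!
The base points are merely swapped, so everything is about the coefficients `q` of the inverse
jet. The linear part `q₁ = p₁⁻¹` depends continuously on `p₁` thanks to the identity
`Q - Q₀ = Q (P₀ - P) Q₀`, which needs no completeness. For `2 ≤ n ≤ k` the only term of
`(q ∘ p)ₙ = 0` involving `qₙ` is the one along the composition `n = 1 + ⋯ + 1`, namely
`qₙ (p₁ ·, …, p₁ ·)`; composing with `q₁` in every slot gives
`qₙ = -(∑_{c ≠ 1 + ⋯ + 1} q_{|c|} (p_{c₁}, …, p_{c_{|c|}})) ∘ (q₁, …, q₁)`, where only `q_j` with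
`j < n` occur. Each summand is a bounded multilinear expression in the coefficients, hence jointly
continuous, and strong induction on `n` concludes.
-/

/-- The product topology on formal multilinear series (coefficient-wise convergence);
restricted to jets of order `≤ k` this is the usual norm topology on the jet space. -/
noncomputable instance formalMultilinearSeriesTopology {E F : Type*}
    [NormedAddCommGroup E] [NormedSpace ℝ E] [NormedAddCommGroup F] [NormedSpace ℝ F] :
    TopologicalSpace (FormalMultilinearSeries ℝ E F) :=
  inferInstanceAs (TopologicalSpace (∀ n : ℕ, ContinuousMultilinearMap ℝ (fun _ : Fin n => E) F))

open Filter Topology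

section LinearInverse

variable {𝕜 E F : Type*} [NontriviallyNormedField 𝕜] [NormedAddCommGroup E] [NormedSpace 𝕜 E]
  [NormedAddCommGroup F] [NormedSpace 𝕜 F]

theorem ContinuousLinearEquiv.comp_eq_id_of_comp_eq_id (e : E ≃L[𝕜] F) {g : F →L[𝕜] E}
    (h : g.comp (e : E →L[𝕜] F) = .id 𝕜 E) : (e : E →L[𝕜] F).comp g = .id 𝕜 F := by
  have : g = e.symm := by
    ext y
    simpa using DFunLike.congr_fun h (e.symm y)
  subst this
  exact e.coe_comp_coe_symm

theorem ContinuousWithinAt.clm_of_comp_eq_id {X : Type*} [TopologicalSpace X] {s : Set X}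
    {x₀ : X} {P : X → E →L[𝕜] F} {Q : X → F →L[𝕜] E} (hP : ContinuousWithinAt P s x₀)
    (hQP : ∀ x ∈ s, (Q x).comp (P x) = .id 𝕜 E) (hPQ : (P x₀).comp (Q x₀) = .id 𝕜 F) :
    ContinuousWithinAt Q s x₀ := by
  -- `Q x - Q x₀ = Q x ∘ (P x₀ - P x) ∘ Q x₀` bounds `‖Q x - Q x₀‖` linearly in `‖P x - P x₀‖`
  -- as soon as `‖Q x‖` stays bounded, which it does once `‖P x - P x₀‖ ‖Q x₀‖ ≤ 1 / 2`.
  have hdiff : ∀ x ∈ s, ‖Q x - Q x₀‖ ≤ ‖Q x‖ * (‖P x - P x₀‖ * ‖Q x₀‖) := by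
    intro x hx
    have : Q x - Q x₀ = (Q x).comp ((P x₀ - P x).comp (Q x₀)) := by
      rw [ContinuousLinearMap.sub_comp, ContinuousLinearMap.comp_sub, hPQ,
        ← ContinuousLinearMap.comp_assoc, hQP x hx, ContinuousLinearMap.comp_id,
        ContinuousLinearMap.id_comp]
    rw [this, norm_sub_rev (P x)]
    exact (ContinuousLinearMap.opNorm_comp_le _ _).trans
      (by gcongr; exact ContinuousLinearMap.opNorm_comp_le _ _)
  have hδ : Tendsto (fun x => ‖P x - P x₀‖) (𝓝[s] x₀) (𝓝 0) :=
    tendsto_iff_norm_sub_tendsto_zero.1 hP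
  have hsmall : ∀ᶠ x in 𝓝[s] x₀, ‖P x - P x₀‖ * ‖Q x₀‖ ≤ 1 / 2 :=
    (hδ.mul_const ‖Q x₀‖).eventually (ge_mem_nhds (by norm_num : (0 : ℝ) * ‖Q x₀‖ < 1 / 2))
  refine tendsto_iff_norm_sub_tendsto_zero.2 <| squeeze_zero' (.of_forall fun _ => norm_nonneg _)
    ?_ (by simpa using (hδ.mul_const ‖Q x₀‖).const_mul (2 * ‖Q x₀‖))
  filter_upwards [self_mem_nhdsWithin, hsmall] with x hx hsmall
  have hQx : ‖Q x‖ ≤ 2 * ‖Q x₀‖ := by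
    have := norm_le_norm_add_norm_sub' (Q x) (Q x₀)
    nlinarith [hdiff x hx, norm_nonneg (Q x)]
  calc ‖Q x - Q x₀‖ ≤ ‖Q x‖ * (‖P x - P x₀‖ * ‖Q x₀‖) := hdiff x hx
    _ ≤ 2 * ‖Q x₀‖ * (‖P x - P x₀‖ * ‖Q x₀‖) := by gcongr

end LinearInverse

theorem ContinuousOn.compContinuousLinearMap {𝕜 ι X G : Type*} [NontriviallyNormedField 𝕜]
    [Fintype ι] {E E₁ : ι → Type*} [∀ i, NormedAddCommGroup (E i)] [∀ i, NormedSpace 𝕜 (E i)]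
    [∀ i, NormedAddCommGroup (E₁ i)] [∀ i, NormedSpace 𝕜 (E₁ i)]
    [NormedAddCommGroup G] [NormedSpace 𝕜 G] [TopologicalSpace X] {s : Set X}
    {f : X → ContinuousMultilinearMap 𝕜 E₁ G} {g : X → ∀ i, E i →L[𝕜] E₁ i}
    (hf : ContinuousOn f s) (hg : ContinuousOn g s) :
    ContinuousOn (fun x => (f x).compContinuousLinearMap (g x)) s :=
  ((ContinuousMultilinearMap.compContinuousLinearMapContinuousMultilinear 𝕜 E E₁ G).cont
    |>.comp_continuousOn hg).clm_apply hf

namespace Composition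

variable {n : ℕ} (c : Composition n)

def toOrderedFinpartition : OrderedFinpartition n where
  length := c.length
  partSize := c.blocksFun
  partSize_pos i := c.one_le_blocksFun i
  emb i := c.embedding i
  emb_strictMono i := (c.embedding i).strictMono
  parts_strictMono i j hij := by
    have := c.sizeUpTo_succ' i
    have := c.monotone_sizeUpTo (show (i : ℕ) + 1 ≤ j from hij)
    have := c.one_le_blocksFun i
    simp only [coe_embedding, Fin.lt_def]
    omega
  disjoint i _ j _ hij := c.disjoint_range hij
  cover j := ⟨c.index j, c.mem_range_embedding j⟩

end Composition

namespace FormalMultilinearSeries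

variable {𝕜 E F G : Type*} [NontriviallyNormedField 𝕜] [NormedAddCommGroup E] [NormedSpace 𝕜 E]
  [NormedAddCommGroup F] [NormedSpace 𝕜 F] [NormedAddCommGroup G] [NormedSpace 𝕜 G] {n : ℕ}

theorem continuousOn_compAlongComposition {X : Type*} [TopologicalSpace X] {s : Set X}
    {q : X → FormalMultilinearSeries 𝕜 F G} {p : X → FormalMultilinearSeries 𝕜 E F}
    (c : Composition n) (hq : ContinuousOn (fun x => q x c.length) s)
    (hp : ∀ m, ContinuousOn (fun x => p x m) s) :
    ContinuousOn (fun x => (q x).compAlongComposition (p x) c) s :=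
  -- `q.compAlongComposition p c` is definitionally
  -- `q.compAlongOrderedFinpartition p c.toOrderedFinpartition`
  (c.toOrderedFinpartition.compAlongOrderedFinpartitionL 𝕜 E F G).continuous_uncurry_of_multilinear
    |>.comp_continuousOn (hq.prodMk (continuousOn_pi.2 fun _ => hp _))

theorem compAlongComposition_ones (q : FormalMultilinearSeries 𝕜 F G)
    (p : FormalMultilinearSeries 𝕜 E F) (n : ℕ) :
    q.compAlongComposition p (Composition.ones n) =
      (q n).compContinuousLinearMap fun _ => continuousMultilinearCurryFin1 𝕜 E F (p 1) := by
  ext v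
  simp only [compAlongComposition_apply, applyComposition_ones,
    ContinuousMultilinearMap.compContinuousLinearMap_apply, continuousMultilinearCurryFin1_apply]
  refine q.congr (Composition.ones_length n) fun i _ hi => ?_
  congr 1

theorem coeff_eq_of_comp_eq_zero {q : FormalMultilinearSeries 𝕜 F E}
    {p : FormalMultilinearSeries 𝕜 E F}
    (hpq : (continuousMultilinearCurryFin1 𝕜 E F (p 1)).comp
      (continuousMultilinearCurryFin1 𝕜 F E (q 1)) = ContinuousLinearMap.id 𝕜 F)
    (h : q.comp p n = 0) :
    q n = ContinuousMultilinearMap.compContinuousLinearMap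
      (-∑ c ∈ Finset.univ.erase (Composition.ones n), q.compAlongComposition p c)
      fun _ => continuousMultilinearCurryFin1 𝕜 F E (q 1) := by
  classical
  have hsplit : q.comp p n = (q n).compContinuousLinearMap
      (fun _ => continuousMultilinearCurryFin1 𝕜 E F (p 1)) +
      ∑ c ∈ Finset.univ.erase (Composition.ones n), q.compAlongComposition p c := by
    rw [← compAlongComposition_ones, add_comm, Finset.sum_erase_add _ _ (Finset.mem_univ _)]
    rfl
  rw [← eq_neg_of_add_eq_zero_left (hsplit.symm.trans h)]
  ext v
  simp only [ContinuousMultilinearMap.compContinuousLinearMap_apply]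
  congr 1
  funext i
  simpa using (DFunLike.congr_fun hpq (v i)).symm

theorem continuousOn_coeff_of_comp_eq_zero {X : Type*} [TopologicalSpace X] {s : Set X}
    {q : X → FormalMultilinearSeries 𝕜 F E} {p : X → FormalMultilinearSeries 𝕜 E F}
    (hn : 1 < n) (hp : ∀ m, ContinuousOn (fun x => p x m) s)
    (hq : ∀ m < n, ContinuousOn (fun x => q x m) s)
    (hpq : ∀ x ∈ s, (continuousMultilinearCurryFin1 𝕜 E F (p x 1)).comp
      (continuousMultilinearCurryFin1 𝕜 F E (q x 1)) = ContinuousLinearMap.id 𝕜 F)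
    (hcomp : ∀ x ∈ s, (q x).comp (p x) n = 0) :
    ContinuousOn (fun x => q x n) s := by
  refine ContinuousOn.congr ?_ fun x hx => coeff_eq_of_comp_eq_zero (hpq x hx) (hcomp x hx)
  refine .compContinuousLinearMap (.neg <| continuousOn_finsetSum _ fun c hc => ?_)
    (continuousOn_pi.2 fun _ => (continuousMultilinearCurryFin1 𝕜 F E).continuous
      |>.comp_continuousOn (hq 1 hn))
  have hc : c.length < n := not_le.1 fun h =>
    Finset.ne_of_mem_erase hc (Composition.eq_ones_iff_le_length.2 h)
  exact continuousOn_compAlongComposition c (hq _ hc) hp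

end FormalMultilinearSeries

theorem stmt_10_general {E F : Type*} [NormedAddCommGroup E] [NormedSpace ℝ E]
    [NormedAddCommGroup F] [NormedSpace ℝ F]
    (k : ℕ)
    (Φ : E × F × FormalMultilinearSeries ℝ E F → F × E × FormalMultilinearSeries ℝ F E)
    (hΦ : ∀ σ ∈ {σ : E × F × FormalMultilinearSeries ℝ E F |
        σ.2.2 0 = 0 ∧ (∀ n, k < n → σ.2.2 n = 0) ∧
        ∃ e : E ≃L[ℝ] F, continuousMultilinearCurryFin1 ℝ E F (σ.2.2 1) = (e : E →L[ℝ] F)},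
      (Φ σ).1 = σ.2.1 ∧ (Φ σ).2.1 = σ.1 ∧
      (Φ σ).2.2 0 = 0 ∧ (∀ n, k < n → (Φ σ).2.2 n = 0) ∧
      (continuousMultilinearCurryFin1 ℝ F E ((Φ σ).2.2 1)).comp
          (continuousMultilinearCurryFin1 ℝ E F (σ.2.2 1)) = ContinuousLinearMap.id ℝ E ∧
      ∀ n, 2 ≤ n → n ≤ k → ((Φ σ).2.2).comp σ.2.2 n = 0) :
    ContinuousOn Φ {σ : E × F × FormalMultilinearSeries ℝ E F |
        σ.2.2 0 = 0 ∧ (∀ n, k < n → σ.2.2 n = 0) ∧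
        ∃ e : E ≃L[ℝ] F, continuousMultilinearCurryFin1 ℝ E F (σ.2.2 1) = (e : E →L[ℝ] F)} := by
  set s := {σ : E × F × FormalMultilinearSeries ℝ E F |
        σ.2.2 0 = 0 ∧ (∀ n, k < n → σ.2.2 n = 0) ∧
        ∃ e : E ≃L[ℝ] F, continuousMultilinearCurryFin1 ℝ E F (σ.2.2 1) = (e : E →L[ℝ] F)}
  have hp : ∀ m, Continuous fun σ : E × F × FormalMultilinearSeries ℝ E F => σ.2.2 m :=
    fun m => (continuous_apply m).comp (continuous_snd.comp continuous_snd)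
  have hpq : ∀ σ ∈ s, (continuousMultilinearCurryFin1 ℝ E F (σ.2.2 1)).comp
      (continuousMultilinearCurryFin1 ℝ F E ((Φ σ).2.2 1)) = ContinuousLinearMap.id ℝ F := by
    intro σ hσ
    obtain ⟨e, he⟩ := hσ.2.2
    have hqp := (hΦ σ hσ).2.2.2.2.1
    rw [he] at hqp ⊢
    exact e.comp_eq_id_of_comp_eq_id hqp
  have hq₁ : ContinuousOn (fun σ => continuousMultilinearCurryFin1 ℝ F E ((Φ σ).2.2 1)) s :=
    fun σ hσ => ContinuousWithinAt.clm_of_comp_eq_id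
      ((continuousMultilinearCurryFin1 ℝ E F).continuous.comp (hp 1)).continuousWithinAt
      (fun σ hσ => (hΦ σ hσ).2.2.2.2.1) (hpq σ hσ)
  have hq : ∀ n, ContinuousOn (fun σ => (Φ σ).2.2 n) s := by
    intro n
    induction n using Nat.strong_induction_on with | _ n ih =>
    obtain rfl | rfl | hn : n = 0 ∨ n = 1 ∨ 1 < n := by omega
    · exact continuousOn_const.congr fun σ hσ => (hΦ σ hσ).2.2.1
    · exact ((continuousMultilinearCurryFin1 ℝ F E).symm.continuous.comp_continuousOn hq₁).congr
        fun σ _ => ((continuousMultilinearCurryFin1 ℝ F E).symm_apply_apply _).symm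
    · rcases le_or_gt n k with hnk | hkn
      · exact FormalMultilinearSeries.continuousOn_coeff_of_comp_eq_zero hn
          (fun m => (hp m).continuousOn) ih hpq fun σ hσ => (hΦ σ hσ).2.2.2.2.2 n hn hnk
      · exact continuousOn_const.congr fun σ hσ => (hΦ σ hσ).2.2.2.1 n hkn
  refine .prodMk ?_ (.prodMk ?_ (continuousOn_pi.2 hq))
  · exact (continuous_fst.comp continuous_snd).continuousOn.congr fun σ hσ => (hΦ σ hσ).1
  · exact continuous_fst.continuousOn.congr fun σ hσ => (hΦ σ hσ).2.1

/-- Jet inversion is well defined and continuous on the set of invertible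
`k`-jets. A `k`-jet is represented as `(x, y, p)` with `p` a formal multilinear series
vanishing in degree `0` and in degrees `> k`; it is invertible when its linear part `p₁`
is a continuous linear equivalence. Any map `Φ` that assigns to each invertible `k`-jet its
inverse jet `(y, x, q)` — characterized by `q₁ = p₁⁻¹` and the recursive Faà di Bruno
inversion relations, i.e. the truncated composition `q∘p` is the identity jet — is
continuous on this set. -/
theorem stmt_10 {E F : Type*} [NormedAddCommGroup E] [NormedSpace ℝ E]
    [NormedAddCommGroup F] [NormedSpace ℝ F]
    (k : ℕ) (hk : 1 ≤ k)
    (Φ : E × F × FormalMultilinearSeries ℝ E F → F × E × FormalMultilinearSeries ℝ F E)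
    (hΦ : ∀ σ ∈ {σ : E × F × FormalMultilinearSeries ℝ E F |
        σ.2.2 0 = 0 ∧ (∀ n, k < n → σ.2.2 n = 0) ∧
        ∃ e : E ≃L[ℝ] F, continuousMultilinearCurryFin1 ℝ E F (σ.2.2 1) = (e : E →L[ℝ] F)},
      (Φ σ).1 = σ.2.1 ∧ (Φ σ).2.1 = σ.1 ∧
      (Φ σ).2.2 0 = 0 ∧ (∀ n, k < n → (Φ σ).2.2 n = 0) ∧
      (continuousMultilinearCurryFin1 ℝ F E ((Φ σ).2.2 1)).comp
          (continuousMultilinearCurryFin1 ℝ E F (σ.2.2 1)) = ContinuousLinearMap.id ℝ E ∧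
      ∀ n, 2 ≤ n → n ≤ k → ((Φ σ).2.2).comp σ.2.2 n = 0) :
    ContinuousOn Φ {σ : E × F × FormalMultilinearSeries ℝ E F |
        σ.2.2 0 = 0 ∧ (∀ n, k < n → σ.2.2 n = 0) ∧
        ∃ e : E ≃L[ℝ] F, continuousMultilinearCurryFin1 ℝ E F (σ.2.2 1) = (e : E →L[ℝ] F)} :=
  stmt_10_general k Φ hΦ
end

section
/- Let E, F, G be Banach spaces, U ⊆ E, V ⊆ F open, and f : U → V a C^k map. Then the pull-back map f* : C^k(V, G) → C^k(U, G), g ↦ g∘f, is a continuous linear map (in particular smooth), where C^k spaces carry the topology of uniform convergence of all derivatives up to order k on compact sets. -/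
open Set

lemma iFD_sub_apply {E F : Type*} [NormedAddCommGroup E] [NormedSpace ℝ E]
    [NormedAddCommGroup F] [NormedSpace ℝ F] {i : ℕ} {s : Set E} {x : E}
    {f g : E → F} (hf : ContDiffOn ℝ i f s) (hg : ContDiffOn ℝ i g s)
    (hu : UniqueDiffOn ℝ s) (hx : x ∈ s) :
    iteratedFDerivWithin ℝ i (f - g) s x =
      iteratedFDerivWithin ℝ i f s x - iteratedFDerivWithin ℝ i g s x := by
  have : f - g = f + fun y => -g y := by ext y; simp [sub_eq_add_neg]
  rw [this, iteratedFDerivWithin_add_apply (hf x hx) (hg.neg x hx) hu hx]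
  have h2 : (fun x => -g x) = -g := rfl
  rw [h2, iteratedFDerivWithin_neg_apply hu hx, sub_eq_add_neg]

/-- For Banach spaces `E, F, G`, open sets `U ⊆ E`, `V ⊆ F`, and a `C^k` map
`f : U → V`, the pull-back `f* : C^k(V, G) → C^k(U, G)`, `g ↦ g∘f`, is linear and continuous
for the topologies of uniform convergence of all derivatives up to order `k` on compact
sets (continuity is expressed by the standard neighborhood-basis formulation). -/
theorem stmt_12 {E F G : Type*} [NormedAddCommGroup E] [NormedSpace ℝ E]
    [NormedAddCommGroup F] [NormedSpace ℝ F] [NormedAddCommGroup G] [NormedSpace ℝ G]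
    (k : ℕ) (U : Set E) (V : Set F) (hU : IsOpen U) (hV : IsOpen V)
    (f : E → F) (hf : ContDiffOn ℝ k f U) (hmaps : Set.MapsTo f U V) :
    -- linearity of the pull-back
    (∀ (g₁ g₂ : F → G) (c : ℝ),
      (fun x => (g₁ + c • g₂) (f x)) = (fun x => g₁ (f x)) + c • fun x => g₂ (f x)) ∧
    -- continuity of the pull-back in the compact-open `C^k` topologies
    (∀ g : F → G, ContDiffOn ℝ k g V → ∀ K, K ⊆ U → IsCompact K → ∀ ε > (0 : ℝ),
      ∃ L, L ⊆ V ∧ IsCompact L ∧ ∃ δ > (0 : ℝ), ∀ g' : F → G, ContDiffOn ℝ k g' V →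
        (∀ x ∈ L, ∀ j ≤ k, ‖iteratedFDerivWithin ℝ j g' V x - iteratedFDerivWithin ℝ j g V x‖ < δ) →
        ∀ x ∈ K, ∀ j ≤ k,
          ‖iteratedFDerivWithin ℝ j (g' ∘ f) U x - iteratedFDerivWithin ℝ j (g ∘ f) U x‖ < ε) := by
  constructor
  · intro g₁ g₂ c
    funext x
    simp
  intro g hg K hKU hKc ε hε
  have hUu : UniqueDiffOn ℝ U := hU.uniqueDiffOn
  have hVu : UniqueDiffOn ℝ V := hV.uniqueDiffOn
  refine ⟨f '' K, (hmaps.mono_left hKU).image_subset, hKc.image_of_continuousOn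
    (hf.continuousOn.mono hKU), ?_⟩
  -- bound the derivatives of f on K
  set φ : E → ℝ := fun x => ∑ i ∈ Finset.range (k + 1), ‖iteratedFDerivWithin ℝ i f U x‖ with hφ
  have hφc : ContinuousOn φ K := by
    apply ContinuousOn.mono _ hKU
    apply continuousOn_finset_sum
    intro i hi
    exact (hf.continuousOn_iteratedFDerivWithin
      (by exact_mod_cast Nat.lt_succ_iff.1 (Finset.mem_range.1 hi)) hUu).norm
  obtain ⟨D₀, hD₀⟩ : ∃ D₀, ∀ x ∈ K, φ x ≤ D₀ := by
    rcases K.eq_empty_or_nonempty with h | h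
    · exact ⟨0, by simp [h]⟩
    · obtain ⟨z, hz, hmax⟩ := hKc.exists_isMaxOn h hφc
      exact ⟨φ z, hmax⟩
  set D : ℝ := max D₀ 1 with hD
  have hD1 : (1 : ℝ) ≤ D := le_max_right _ _
  have hDf : ∀ x ∈ K, ∀ i ≤ k, ‖iteratedFDerivWithin ℝ i f U x‖ ≤ D := by
    intro x hx i hi
    refine le_trans ?_ (le_max_left D₀ 1)
    refine le_trans ?_ (hD₀ x hx)
    exact Finset.single_le_sum (f := fun i => ‖iteratedFDerivWithin ℝ i f U x‖)
      (fun j _ => norm_nonneg _) (Finset.mem_range.2 (Nat.lt_succ_of_le hi))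
  have hDk : (0:ℝ) < (Nat.factorial k : ℝ) * D ^ k := by positivity
  refine ⟨ε / ((Nat.factorial k : ℝ) * D ^ k * 2), by positivity, ?_⟩
  set δ : ℝ := ε / ((Nat.factorial k : ℝ) * D ^ k * 2) with hδ
  intro g' hg' hclose x hx j hj
  have hxU : x ∈ U := hKU hx
  have hjk : (j : WithTop ℕ∞) ≤ (k : WithTop ℕ∞) := by exact_mod_cast hj
  have hgj : ContDiffOn ℝ j g V := hg.of_le (by exact_mod_cast hj)
  have hg'j : ContDiffOn ℝ j g' V := hg'.of_le (by exact_mod_cast hj)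
  have hfj : ContDiffOn ℝ j f U := hf.of_le (by exact_mod_cast hj)
  have hsub : ContDiffOn ℝ j (g' - g) V := hg'j.sub hgj
  -- rewrite as derivative of (g' - g) ∘ f
  have key : iteratedFDerivWithin ℝ j (g' ∘ f) U x - iteratedFDerivWithin ℝ j (g ∘ f) U x
      = iteratedFDerivWithin ℝ j ((g' - g) ∘ f) U x := by
    have h1 : (g' - g) ∘ f = g' ∘ f - g ∘ f := by ext y; simp
    rw [h1, iFD_sub_apply (hg'j.comp hfj hmaps) (hgj.comp hfj hmaps) hUu hxU]
  rw [key]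
  have hbound : ‖iteratedFDerivWithin ℝ j ((g' - g) ∘ f) U x‖ ≤ (Nat.factorial j : ℝ) * δ * D ^ j := by
    apply norm_iteratedFDerivWithin_comp_le (N := (j : WithTop ℕ∞)) hsub hfj le_rfl hVu hUu
      hmaps hxU
    · intro i hi
      have hfx : f x ∈ f '' K := mem_image_of_mem f hx
      have := hclose (f x) hfx i (le_trans hi hj)
      rw [iFD_sub_apply (hg'.of_le (by exact_mod_cast le_trans hi hj))
        (hg.of_le (by exact_mod_cast le_trans hi hj)) hVu (hmaps hxU)]
      exact this.le
    · intro i hi1 hi2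
      calc ‖iteratedFDerivWithin ℝ i f U x‖ ≤ D := hDf x hx i (le_trans hi2 hj)
        _ ≤ D ^ i := le_self_pow₀ (by linarith) (by omega)
  refine lt_of_le_of_lt hbound ?_
  have h1 : (Nat.factorial j : ℝ) * δ * D ^ j ≤ (Nat.factorial k : ℝ) * δ * D ^ k := by
    have hδ0 : (0:ℝ) ≤ δ := by positivity
    have : (Nat.factorial j : ℝ) ≤ (Nat.factorial k : ℝ) := by exact_mod_cast Nat.factorial_le hj
    have hDp : D ^ j ≤ D ^ k := pow_le_pow_right₀ hD1 hj
    calc (Nat.factorial j : ℝ) * δ * D ^ j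
        ≤ (Nat.factorial k : ℝ) * δ * D ^ j :=
          mul_le_mul_of_nonneg_right (mul_le_mul_of_nonneg_right this hδ0)
            (pow_nonneg (le_trans zero_le_one hD1) j)
      _ ≤ (Nat.factorial k : ℝ) * δ * D ^ k :=
          mul_le_mul_of_nonneg_left hDp (by positivity)
  refine lt_of_le_of_lt h1 ?_
  rw [hδ]
  rw [div_eq_mul_inv]
  have : (Nat.factorial k : ℝ) * (ε * ((Nat.factorial k : ℝ) * D ^ k * 2)⁻¹) * D ^ k
      = ε * (((Nat.factorial k : ℝ) * D ^ k) * ((Nat.factorial k : ℝ) * D ^ k * 2)⁻¹) := by ring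
  rw [this]
  have h2 : ((Nat.factorial k : ℝ) * D ^ k) * ((Nat.factorial k : ℝ) * D ^ k * 2)⁻¹ = 1/2 := by
    field_simp
  rw [h2]
  linarith
end

section
/- Let E, F, G be Banach spaces, U ⊆ E, V ⊆ F, W ⊆ G open. Then the composition map C^k(U, V) × C^k(V, W) → C^k(U, W), (f, g) ↦ g∘f, is sequentially continuous with respect to the compact-open C^k topologies. -/
open Filter Set Topology

/-- Finite sum of uniformly convergent sequences converges uniformly. -/
lemma aux_sum {X B ι' : Type*} [NormedAddCommGroup B] (s : Finset ι')
    {Fc : ι' → ℕ → X → B} {fc : ι' → X → B} {K : Set X}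
    (h : ∀ c ∈ s, TendstoUniformlyOn (Fc c) (fc c) atTop K) :
    TendstoUniformlyOn (fun n x => ∑ c ∈ s, Fc c n x) (fun x => ∑ c ∈ s, fc c x) atTop K := by
  classical
  induction s using Finset.induction with
  | empty =>
      simp only [Finset.sum_empty]
      exact (tendsto_const_nhds (x := (0 : B))).tendstoUniformlyOn_const K
  | insert a s' hc ih =>
      simp only [Finset.sum_insert hc]
      exact (h a (Finset.mem_insert_self a s')).add
        (ih fun c hcs => h c (Finset.mem_insert_of_mem hcs))

/-- Uniform convergence into a finite product from componentwise uniform convergence. -/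
lemma aux_pi {X ι : Type*} [Fintype ι] {A : ι → Type*} [∀ i, PseudoMetricSpace (A i)]
    {vn : ℕ → X → ∀ i, A i} {v : X → ∀ i, A i} {K : Set X}
    (h : ∀ i, TendstoUniformlyOn (fun n x => vn n x i) (fun x => v x i) atTop K) :
    TendstoUniformlyOn vn v atTop K := by
  rw [Metric.tendstoUniformlyOn_iff]
  intro ε hε
  have H : ∀ i, ∀ᶠ n in atTop, ∀ x ∈ K, dist (v x i) (vn n x i) < ε := fun i => by
    have := (Metric.tendstoUniformlyOn_iff.mp (h i)) ε hε
    exact this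
  have := (Filter.eventually_all (ι := ι)).mpr H
  filter_upwards [this] with n hn x hx
  rw [dist_pi_lt_iff hε]
  exact fun i => hn i x hx

/-- Applying uniformly convergent multilinear maps to uniformly convergent arguments. -/
lemma aux_apply {X ι : Type*} [Fintype ι] {A : ι → Type*}
    [∀ i, NormedAddCommGroup (A i)] [∀ i, NormedSpace ℝ (A i)]
    {B : Type*} [NormedAddCommGroup B] [NormedSpace ℝ B]
    {Ψn : ℕ → X → ContinuousMultilinearMap ℝ A B} {Ψ : X → ContinuousMultilinearMap ℝ A B}
    {vn : ℕ → X → ∀ i, A i} {v : X → ∀ i, A i} {K : Set X} {C : ℝ}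
    (hΨ : TendstoUniformlyOn Ψn Ψ atTop K) (hv : TendstoUniformlyOn vn v atTop K)
    (hC : 0 ≤ C) (hΨb : ∀ x ∈ K, ‖Ψ x‖ ≤ C) (hvb : ∀ x ∈ K, ‖v x‖ ≤ C) :
    TendstoUniformlyOn (fun n x => Ψn n x (vn n x)) (fun x => Ψ x (v x)) atTop K := by
  rw [Metric.tendstoUniformlyOn_iff] at hΨ hv ⊢
  intro ε hε
  set d := Fintype.card ι with hd
  set M : ℝ := (C + 1) ^ d + C * d * (C + 1) ^ (d - 1) + 1 with hM
  have hM0 : 0 < M := by positivity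
  have hδ0 : 0 < min 1 (ε / (2 * M)) := by positivity
  filter_upwards [hΨ _ hδ0, hv _ hδ0] with n hn1 hn2 x hx
  have h1 : dist (Ψ x) (Ψn n x) < min 1 (ε / (2 * M)) := hn1 x hx
  have h2 : dist (v x) (vn n x) < min 1 (ε / (2 * M)) := hn2 x hx
  have h2' : ‖v x - vn n x‖ < min 1 (ε / (2 * M)) := by rwa [← dist_eq_norm]
  have h1' : ‖Ψ x - Ψn n x‖ < min 1 (ε / (2 * M)) := by rwa [← dist_eq_norm]
  have hvnb : ‖vn n x‖ ≤ C + 1 := by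
    have := norm_sub_norm_le (vn n x) (v x)
    have h2'' : ‖vn n x - v x‖ ≤ 1 := by
      rw [← dist_eq_norm, dist_comm]
      exact le_of_lt (lt_of_lt_of_le h2 (min_le_left _ _))
    have := hvb x hx
    linarith [norm_sub_norm_le (vn n x) (v x)]
  -- main estimate
  have key : dist (Ψ x (v x)) (Ψn n x (vn n x)) ≤
      C * d * (C + 1) ^ (d - 1) * ‖v x - vn n x‖ + ‖Ψ x - Ψn n x‖ * (C + 1) ^ d := by
    rw [dist_eq_norm]
    calc ‖Ψ x (v x) - Ψn n x (vn n x)‖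
        ≤ ‖Ψ x (v x) - Ψ x (vn n x)‖ + ‖Ψ x (vn n x) - Ψn n x (vn n x)‖ := by
          simpa using norm_add_le (Ψ x (v x) - Ψ x (vn n x)) (Ψ x (vn n x) - Ψn n x (vn n x))
      _ ≤ C * d * (C + 1) ^ (d - 1) * ‖v x - vn n x‖ + ‖Ψ x - Ψn n x‖ * (C + 1) ^ d := by
          gcongr ?_ + ?_
          · refine ((Ψ x).norm_image_sub_le (v x) (vn n x)).trans ?_
            have hmax : max ‖v x‖ ‖vn n x‖ ≤ C + 1 :=
              max_le ((hvb x hx).trans (by linarith)) hvnb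
            gcongr <;> first | exact hΨb x hx | exact hmax | positivity
          · have : ‖(Ψ x - Ψn n x) (vn n x)‖ ≤ ‖Ψ x - Ψn n x‖ * ∏ i, ‖vn n x i‖ :=
              (Ψ x - Ψn n x).le_opNorm (vn n x)
            refine (le_of_eq (by simp)).trans (this.trans ?_)
            gcongr
            have : ∏ i, ‖vn n x i‖ ≤ ∏ _i : ι, (C + 1) :=
              Finset.prod_le_prod (fun i _ => norm_nonneg _)
                (fun i _ => (norm_le_pi_norm (vn n x) i).trans hvnb)
            simpa [Finset.prod_const, hd, Finset.card_univ] using this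
  have hA : ‖v x - vn n x‖ ≤ ε / (2 * M) := (h2'.trans_le (min_le_right _ _)).le
  have hB : ‖Ψ x - Ψn n x‖ ≤ ε / (2 * M) := (h1'.trans_le (min_le_right _ _)).le
  have hεM : 0 < ε / (2 * M) := by positivity
  have final : C * d * (C + 1) ^ (d - 1) * ‖v x - vn n x‖ + ‖Ψ x - Ψn n x‖ * (C + 1) ^ d
      ≤ ε / 2 := by
    have step : C * d * (C + 1) ^ (d - 1) * ‖v x - vn n x‖ + ‖Ψ x - Ψn n x‖ * (C + 1) ^ d
        ≤ C * d * (C + 1) ^ (d - 1) * (ε / (2 * M)) + (ε / (2 * M)) * (C + 1) ^ d := by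
      gcongr
    refine step.trans ?_
    have : C * d * (C + 1) ^ (d - 1) * (ε / (2 * M)) + (ε / (2 * M)) * (C + 1) ^ d
        = (ε / (2 * M)) * (C * d * (C + 1) ^ (d - 1) + (C + 1) ^ d) := by ring
    rw [this]
    have hle : C * d * (C + 1) ^ (d - 1) + (C + 1) ^ d ≤ M := by
      rw [hM]; nlinarith [pow_nonneg (by linarith : (0:ℝ) ≤ C + 1) d,
        pow_nonneg (by linarith : (0:ℝ) ≤ C + 1) (d - 1)]
    calc (ε / (2 * M)) * (C * d * (C + 1) ^ (d - 1) + (C + 1) ^ d)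
        ≤ (ε / (2 * M)) * M := by gcongr
      _ = ε / 2 := by field_simp
  linarith [key]
/-- The union of the images of a compact set under a uniformly convergent sequence of continuous
functions together with the image under the limit is compact. -/
lemma aux_compactUnion {E F : Type*} [NormedAddCommGroup E] [NormedAddCommGroup F]
    {K : Set E} (hK : IsCompact K) {f : E → F} {fn : ℕ → E → F}
    (hf : ContinuousOn f K) (hfn : ∀ n, ContinuousOn (fn n) K)
    (h : TendstoUniformlyOn fn f atTop K) :
    IsCompact (f '' K ∪ ⋃ n, fn n '' K) := by
  haveI : CompactSpace K := isCompact_iff_compactSpace.mp hK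
  let F0 : C(K, F) := ⟨K.restrict f, hf.restrict⟩
  let Fn : ℕ → C(K, F) := fun n => ⟨K.restrict (fn n), (hfn n).restrict⟩
  have htu : TendstoUniformly (fun n (x : K) => fn n x) (K.restrict f) atTop :=
    (tendstoUniformlyOn_iff_tendstoUniformly_comp_coe).mp h
  have htend : Tendsto Fn atTop (𝓝 F0) :=
    ContinuousMap.tendsto_iff_tendstoUniformly.mpr (by exact htu)
  have hS : IsCompact (insert F0 (Set.range Fn)) := htend.isCompact_insert_range
  have heval : Continuous (fun p : C(K, F) × K => p.1 p.2) := continuous_eval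
  have himg : IsCompact ((fun p : C(K, F) × K => p.1 p.2) ''
      ((insert F0 (Set.range Fn)) ×ˢ univ)) :=
    (hS.prod isCompact_univ).image heval
  convert himg using 1
  ext y
  constructor
  · rintro (⟨x, hx, rfl⟩ | hy)
    · exact ⟨(F0, ⟨x, hx⟩), ⟨mem_insert _ _, mem_univ _⟩, rfl⟩
    · obtain ⟨_, ⟨n, rfl⟩, x, hx, rfl⟩ := hy
      exact ⟨(Fn n, ⟨x, hx⟩), ⟨mem_insert_of_mem _ ⟨n, rfl⟩, mem_univ _⟩, rfl⟩
  · rintro ⟨⟨φ, x⟩, ⟨hφ, -⟩, rfl⟩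
    rcases mem_insert_iff.mp hφ with rfl | ⟨n, rfl⟩
    · exact Or.inl ⟨x, x.2, rfl⟩
    · exact Or.inr (mem_iUnion.mpr ⟨n, ⟨x, x.2, rfl⟩⟩)


/-- Composition `C^k(U,V) × C^k(V,W) → C^k(U,W)`, `(f,g) ↦ g∘f`, is
sequentially continuous with respect to the compact-open `C^k` topologies: if `f_n → f` in
`C^k(U,V)` and `g_n → g` in `C^k(V,W)` (i.e. all derivatives up to order `k` converge
uniformly on compact subsets), then `g_n∘f_n → g∘f` in `C^k(U,W)`. -/
theorem stmt_13 {E F G : Type*} [NormedAddCommGroup E] [NormedSpace ℝ E]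
    [NormedAddCommGroup F] [NormedSpace ℝ F] [NormedAddCommGroup G] [NormedSpace ℝ G]
    (k : ℕ) (U : Set E) (V : Set F) (W : Set G) (hU : IsOpen U) (hV : IsOpen V) (hW : IsOpen W)
    (f : E → F) (fn : ℕ → E → F) (g : F → G) (gn : ℕ → F → G)
    (hf : ContDiffOn ℝ k f U) (hfn : ∀ n, ContDiffOn ℝ k (fn n) U)
    (hfV : Set.MapsTo f U V) (hfnV : ∀ n, Set.MapsTo (fn n) U V)
    (hg : ContDiffOn ℝ k g V) (hgn : ∀ n, ContDiffOn ℝ k (gn n) V)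
    (hgW : Set.MapsTo g V W) (hgnW : ∀ n, Set.MapsTo (gn n) V W)
    (hfconv : ∀ K, K ⊆ U → IsCompact K → ∀ j ≤ k,
      TendstoUniformlyOn (fun n x => iteratedFDerivWithin ℝ j (fn n) U x)
        (fun x => iteratedFDerivWithin ℝ j f U x) Filter.atTop K)
    (hgconv : ∀ L, L ⊆ V → IsCompact L → ∀ j ≤ k,
      TendstoUniformlyOn (fun n y => iteratedFDerivWithin ℝ j (gn n) V y)
        (fun y => iteratedFDerivWithin ℝ j g V y) Filter.atTop L) :
    ∀ K, K ⊆ U → IsCompact K → ∀ j ≤ k,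
      TendstoUniformlyOn (fun n x => iteratedFDerivWithin ℝ j (gn n ∘ fn n) U x)
        (fun x => iteratedFDerivWithin ℝ j (g ∘ f) U x) Filter.atTop K := by
  intro K hKU hK j hjk
  classical
  have hUd : UniqueDiffOn ℝ U := hU.uniqueDiffOn
  have hVd : UniqueDiffOn ℝ V := hV.uniqueDiffOn
  -- uniform convergence of the functions themselves
  have hfu : TendstoUniformlyOn fn f atTop K := by
    have h0 := hfconv K hKU hK 0 (Nat.zero_le k)
    have h1 := ((continuousMultilinearCurryFin0 ℝ E F).isometry.uniformContinuous
      ).comp_tendstoUniformlyOn h0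
    refine (h1.congr ?_).congr_right ?_
    · filter_upwards with n x hx
      simp [iteratedFDerivWithin_zero_eq_comp]
    · intro x hx
      simp [Function.comp, iteratedFDerivWithin_zero_eq_comp]
  -- a compact subset of V containing all relevant images
  set L := f '' K ∪ ⋃ n, fn n '' K with hLdef
  have hLc : IsCompact L := aux_compactUnion hK (hf.continuousOn.mono hKU)
    (fun n => ((hfn n).continuousOn).mono hKU) hfu
  have hLV : L ⊆ V := by
    rintro y (⟨x, hx, rfl⟩ | hy)
    · exact hfV (hKU hx)
    · obtain ⟨_, ⟨n, rfl⟩, x, hx, rfl⟩ := hy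
      exact hfnV n (hKU hx)
  have hfL : ∀ x ∈ K, f x ∈ L := fun x hx => Or.inl ⟨x, hx, rfl⟩
  have hfnL : ∀ n, ∀ x ∈ K, fn n x ∈ L :=
    fun n x hx => Or.inr (mem_iUnion.mpr ⟨n, ⟨x, hx, rfl⟩⟩)
  -- derivatives of `gn n` evaluated along `fn n` converge uniformly on `K`
  have bridge : ∀ i : ℕ, i ≤ k →
      TendstoUniformlyOn (fun n x => iteratedFDerivWithin ℝ i (gn n) V (fn n x))
        (fun x => iteratedFDerivWithin ℝ i g V (f x)) atTop K := by
    intro i hik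
    have hgc : ContinuousOn (iteratedFDerivWithin ℝ i g V) V :=
      hg.continuousOn_iteratedFDerivWithin (by exact_mod_cast hik) hVd
    have huc : UniformContinuousOn (iteratedFDerivWithin ℝ i g V) L :=
      hLc.uniformContinuousOn_of_continuous (hgc.mono hLV)
    have hgu := hgconv L hLV hLc i hik
    rw [Metric.tendstoUniformlyOn_iff] at hgu hfu ⊢
    intro ε hε
    obtain ⟨δ, hδ0, hδ⟩ := (Metric.uniformContinuousOn_iff.mp huc) (ε / 2) (by positivity)
    filter_upwards [hgu (ε / 2) (by positivity), hfu δ hδ0] with n hn1 hn2 x hx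
    have e1 : dist (iteratedFDerivWithin ℝ i g V (f x))
        (iteratedFDerivWithin ℝ i g V (fn n x)) < ε / 2 :=
      hδ (f x) (hfL x hx) (fn n x) (hfnL n x hx) (hn2 x hx)
    have e2 : dist (iteratedFDerivWithin ℝ i g V (fn n x))
        (iteratedFDerivWithin ℝ i (gn n) V (fn n x)) < ε / 2 := hn1 (fn n x) (hfnL n x hx)
    calc dist (iteratedFDerivWithin ℝ i g V (f x))
          (iteratedFDerivWithin ℝ i (gn n) V (fn n x))
        ≤ dist (iteratedFDerivWithin ℝ i g V (f x)) (iteratedFDerivWithin ℝ i g V (fn n x))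
          + dist (iteratedFDerivWithin ℝ i g V (fn n x))
            (iteratedFDerivWithin ℝ i (gn n) V (fn n x)) := dist_triangle _ _ _
      _ < ε := by linarith
  -- Faa di Bruno formula
  have hqf : HasFTaylorSeriesUpToOn (k : WithTop ℕ∞) (g ∘ f)
      (fun x => ((ftaylorSeriesWithin ℝ g V) (f x)).taylorComp (ftaylorSeriesWithin ℝ f U x)) U :=
    (hg.ftaylorSeriesWithin hVd).comp (hf.ftaylorSeriesWithin hUd) hfV
  have hqfn : ∀ n, HasFTaylorSeriesUpToOn (k : WithTop ℕ∞) (gn n ∘ fn n)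
      (fun x => ((ftaylorSeriesWithin ℝ (gn n) V) (fn n x)).taylorComp
        (ftaylorSeriesWithin ℝ (fn n) U x)) U :=
    fun n => ((hgn n).ftaylorSeriesWithin hVd).comp ((hfn n).ftaylorSeriesWithin hUd) (hfnV n)
  have hform : ∀ x ∈ K, iteratedFDerivWithin ℝ j (g ∘ f) U x
      = ∑ c : OrderedFinpartition j, (c.compAlongOrderedFinpartitionL ℝ E F G)
          (iteratedFDerivWithin ℝ c.length g V (f x))
          (fun m => iteratedFDerivWithin ℝ (c.partSize m) f U x) := by
    intro x hx
    rw [← hqf.eq_iteratedFDerivWithin_of_uniqueDiffOn (by exact_mod_cast hjk) hUd (hKU hx)]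
    rfl
  have hformn : ∀ n, ∀ x ∈ K, iteratedFDerivWithin ℝ j (gn n ∘ fn n) U x
      = ∑ c : OrderedFinpartition j, (c.compAlongOrderedFinpartitionL ℝ E F G)
          (iteratedFDerivWithin ℝ c.length (gn n) V (fn n x))
          (fun m => iteratedFDerivWithin ℝ (c.partSize m) (fn n) U x) := by
    intro n x hx
    rw [← (hqfn n).eq_iteratedFDerivWithin_of_uniqueDiffOn (by exact_mod_cast hjk) hUd (hKU hx)]
    rfl
  -- uniform convergence of each summand
  have hterm : ∀ c : OrderedFinpartition j,
      TendstoUniformlyOn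
        (fun n x => (c.compAlongOrderedFinpartitionL ℝ E F G)
          (iteratedFDerivWithin ℝ c.length (gn n) V (fn n x))
          (fun m => iteratedFDerivWithin ℝ (c.partSize m) (fn n) U x))
        (fun x => (c.compAlongOrderedFinpartitionL ℝ E F G)
          (iteratedFDerivWithin ℝ c.length g V (f x))
          (fun m => iteratedFDerivWithin ℝ (c.partSize m) f U x)) atTop K := by
    intro c
    set Φ := c.compAlongOrderedFinpartitionL ℝ E F G with hΦdef
    have hΨ : TendstoUniformlyOn
        (fun n x => Φ (iteratedFDerivWithin ℝ c.length (gn n) V (fn n x)))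
        (fun x => Φ (iteratedFDerivWithin ℝ c.length g V (f x))) atTop K := by
      have hb := bridge c.length (le_trans c.length_le hjk)
      exact Φ.uniformContinuous.comp_tendstoUniformlyOn hb
    have hv : TendstoUniformlyOn
        (fun n x => fun m => iteratedFDerivWithin ℝ (c.partSize m) (fn n) U x)
        (fun x => fun m => iteratedFDerivWithin ℝ (c.partSize m) f U x) atTop K :=
      aux_pi (fun m => hfconv K hKU hK (c.partSize m) (le_trans (c.partSize_le m) hjk))
    have hΨc : ContinuousOn (fun x => Φ (iteratedFDerivWithin ℝ c.length g V (f x))) K :=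
      Φ.continuous.comp_continuousOn
        (((hg.continuousOn_iteratedFDerivWithin
            (by exact_mod_cast le_trans c.length_le hjk) hVd)).comp
          (hf.continuousOn.mono hKU) (fun x hx => hfV (hKU hx)))
    obtain ⟨C₁, hC₁⟩ : ∃ C, ∀ x ∈ K,
        ‖Φ (iteratedFDerivWithin ℝ c.length g V (f x))‖ ≤ C :=
      IsCompact.exists_bound_of_continuousOn (E := ContinuousMultilinearMap ℝ
        (fun i : Fin c.length => ContinuousMultilinearMap ℝ (fun _ : Fin (c.partSize i) => E) F)
        (ContinuousMultilinearMap ℝ (fun _ : Fin j => E) G)) hK hΨc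
    have hvc : ContinuousOn
        (fun x => fun m => iteratedFDerivWithin ℝ (c.partSize m) f U x) K :=
      continuousOn_pi.mpr fun m =>
        ((hf.continuousOn_iteratedFDerivWithin
          (by exact_mod_cast le_trans (c.partSize_le m) hjk) hUd)).mono hKU
    obtain ⟨C₂, hC₂⟩ : ∃ C, ∀ x ∈ K,
        ‖fun m => iteratedFDerivWithin ℝ (c.partSize m) f U x‖ ≤ C :=
      IsCompact.exists_bound_of_continuousOn (E := ∀ i : Fin c.length,
        ContinuousMultilinearMap ℝ (fun _ : Fin (c.partSize i) => E) F) hK hvc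
    refine aux_apply hΨ hv (C := max (max C₁ C₂) 0) (le_max_right _ _)
      (fun x hx => le_max_of_le_left (le_max_of_le_left (hC₁ x hx)))
      (fun x hx => le_max_of_le_left (le_max_of_le_right (hC₂ x hx)))
  have main := aux_sum (Finset.univ : Finset (OrderedFinpartition j))
    (fun c _ => hterm c)
  refine (main.congr ?_).congr_right ?_
  · filter_upwards with n x hx
    exact (hformn n x hx).symm
  · intro x hx
    exact (hform x hx).symm
end

section
/- Let G be a Banach half-Lie group with a right-invariant strong Riemannian metric g, and let exp_e be the Riemannian exponential map defined on an open star-shaped neighborhood of 0 ∈ T_eG. If every geodesic starting at e extends by right translation (i.e., the right translate of a geodesic is a geodesic and the metric is right-invariant), then exp_e extends to all of T_eG; that is, (G, g) is geodesically complete at e: for every X ∈ T_eG the geodesic t ↦ exp_e(tX) is defined for all t ∈ ℝ. -/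
/-- Geodesic completeness at the identity of a half-Lie group with a strong
right-invariant metric. `γ X` is the maximal geodesic through the identity with initial
velocity `X ∈ T_eG = V`, with (order-connected) domain of definition `D X`. The strong
metric gives local existence on a uniform time interval for initial velocities in an
`ε`-ball (`hlocal`), geodesics admit affine reparametrization (`hscale`), and restarting a
geodesic at time `s` yields — by right translation — a geodesic of the same speed
(`htrans`). Then every geodesic `t ↦ exp_e(tX)` is defined for all `t ∈ ℝ`. -/
theorem stmt_18 {G : Type*} [Group G] {V : Type*} [NormedAddCommGroup V] [NormedSpace ℝ V]
    (γ : V → ℝ → G) (D : V → Set ℝ)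
    (hconn : ∀ X : V, (D X).OrdConnected)
    (hzero : ∀ X : V, (0 : ℝ) ∈ D X ∧ γ X 0 = 1)
    (hscale : ∀ (X : V) (c t : ℝ), t ∈ D (c • X) ↔ c * t ∈ D X)
    (hlocal : ∃ ε > (0 : ℝ), ∀ X : V, ‖X‖ ≤ ε → Set.Icc (-1 : ℝ) 1 ⊆ D X)
    (htrans : ∀ X : V, ∀ s ∈ D X, ∃ Y : V, ‖Y‖ = ‖X‖ ∧
      (∀ t : ℝ, s + t ∈ D X ↔ t ∈ D Y) ∧
      ∀ t ∈ D Y, γ X (s + t) = γ Y t * γ X s) :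
    ∀ (X : V) (t : ℝ), t ∈ D X := by
  obtain ⟨ε, hε, hloc⟩ := hlocal
  -- key: any Z with ‖Z‖ = ‖X‖ admits a uniform small interval
  have small : ∀ (Z : V) (hZ : Z ≠ 0) (u : ℝ), |u| ≤ ε / ‖Z‖ → u ∈ D Z := by
    intro Z hZ u hu
    have hnZ : (0:ℝ) < ‖Z‖ := norm_pos_iff.mpr hZ
    have hc : (0:ℝ) < ε / ‖Z‖ := div_pos hε hnZ
    have h1 : ‖(ε / ‖Z‖) • Z‖ ≤ ε := by
      rw [norm_smul, Real.norm_eq_abs, abs_of_pos hc]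
      rw [div_mul_cancel₀ _ (ne_of_gt hnZ)]
    have := hloc _ h1
    have hmem : u / (ε / ‖Z‖) ∈ Set.Icc (-1:ℝ) 1 := by
      rw [Set.mem_Icc]
      constructor
      · rw [le_div_iff₀ hc]; nlinarith [abs_le.mp hu]
      · rw [div_le_iff₀ hc]; nlinarith [abs_le.mp hu]
    have := this hmem
    rw [hscale] at this
    rwa [mul_div_cancel₀ _ (ne_of_gt hc)] at this
  intro X t
  by_cases hX : X = 0
  · subst hX
    have := (hscale 0 0 t).mpr
    simpa using this (by simpa using (hzero 0).1)
  · set c := ε / ‖X‖ with hcdef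
    have hnX : (0:ℝ) < ‖X‖ := norm_pos_iff.mpr hX
    have hc : (0:ℝ) < c := div_pos hε hnX
    -- step: from s ∈ D X we get s + u ∈ D X for |u| ≤ c
    have step : ∀ s ∈ D X, ∀ u : ℝ, |u| ≤ c → s + u ∈ D X := by
      intro s hs u hu
      obtain ⟨Y, hY, hiff, -⟩ := htrans X s hs
      have hYne : Y ≠ 0 := by
        intro h; rw [h, norm_zero] at hY; exact hX (norm_eq_zero.mp hY.symm)
      have : u ∈ D Y := small Y hYne u (by rwa [hY])
      exact (hiff u).mpr this
    -- by induction: ±(n*c) ∈ D X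
    have ind : ∀ n : ℕ, (n : ℝ) * c ∈ D X ∧ -((n : ℝ) * c) ∈ D X := by
      intro n
      induction n with
      | zero => simpa using (hzero X).1
      | succ n ih =>
        constructor
        · have := step _ ih.1 c (by rw [abs_of_pos hc])
          push_cast; rw [add_mul, one_mul]; exact this
        · have := step _ ih.2 (-c) (by rw [abs_neg, abs_of_pos hc])
          push_cast; rw [add_mul, one_mul, neg_add]; exact this
    obtain ⟨n, hn⟩ := exists_nat_ge (|t| / c)
    have hnc : |t| ≤ (n : ℝ) * c := by
      rw [div_le_iff₀ hc] at hn; linarith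
    have := abs_le.mp hnc
    exact (hconn X).out (ind n).2 (ind n).1 ⟨this.1, this.2⟩
end
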